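/- Let W = W(Γ) be the right-angled Coxeter group of a simple graph Γ with word length ℓ. Let w₁, w₂, w₃, u ∈ W be such that w₂ is a clique word, ℓ(w₁·w₂·w₃) = ℓ(w₁) + ℓ(w₂) + ℓ(w₃), ℓ(w₁·w₂·u) = ℓ(w₁) + ℓ(w₂) + ℓ(u), and ℓ(w₃⁻¹·w₂·u) = ℓ(w₃) + ℓ(w₂) + ℓ(u). If a generator s_v is a right descent of both w₁·w₂·u and w₃⁻¹·w₂·u, then s_v is a right descent of w₂·u. -/

import Mathlib

/-!
Work in the geometric representation `ρ` of `W` on `V →₀ ℤ`, where `s_i` acts by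
`x ↦ x - 2 B(α_i, x) α_i` and `B(α_a, α_b)` is `1`, `0` or `-1`. By Tits' theorem,
`ρ(w) α_i > 0` exactly when `s_i` is not a right descent of `w`, so descents become signs of roots.

Write `w₂ = s_C` and suppose `s_v` is not a right descent of `w₂ u`; let `γ = ρ(u) α_v`.
If `γ < 0`, then `s_C` makes the positive root `-γ` negative, which forces `γ = -α_c` with
`c ∈ C`; then `ρ(w₁ w₂ u) α_v = ρ(w₁) α_c > 0`, because `w₁ s_c` is longer than `w₁`.
If `γ > 0`, then `ρ(w₁) γ > 0`, since otherwise the reflection `u s_v u⁻¹` would shorten both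
`w₁` and `w₃⁻¹ w₂`, against `w₃⁻¹ w₂ w₁⁻¹` being reduced. Moreover `B(α_c, γ) ≤ 0` for `c ∈ C`,
so `ρ(w₁ w₂) γ = ρ(w₁) γ - ∑ 2 B(α_c, γ) ρ(w₁) α_c > 0`. Either way `s_v` is not a right
descent of `w₁ w₂ u`.
-/

namespace RACG

variable {V : Type*} [DecidableEq V]

/-- The right-angled Coxeter matrix of a simple graph `G`: diagonal entries are `1`,
entries at adjacent pairs are `2` (the generators commute), and entries at distinct
non-adjacent pairs are `0` (representing `∞`, i.e. no relation). -/
def racgMatrix (G : SimpleGraph V) [DecidableRel G.Adj] : CoxeterMatrix V where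
  M a b := if a = b then 1 else if G.Adj a b then 2 else 0
  isSymm := by
    refine Matrix.ext fun a b => ?_
    change (if b = a then 1 else if G.Adj b a then 2 else 0) = (if a = b then 1 else if G.Adj a b then 2 else 0)
    by_cases h : a = b
    · subst h; rfl
    · rw [if_neg h, if_neg (Ne.symm h)]
      by_cases hadj : G.Adj a b
      · rw [if_pos hadj, if_pos hadj.symm]
      · rw [if_neg hadj, if_neg (fun h' => hadj h'.symm)]
  diagonal := fun i => by simp
  off_diagonal := fun i i' h => by
    beta_reduce
    rw [if_neg h]
    by_cases hadj : G.Adj i i' <;> simp [hadj]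

variable {G : SimpleGraph V} [DecidableRel G.Adj] {W : Type*} [Group W]

/-- In the right-angled Coxeter group of `G`, the simple reflections at adjacent
vertices commute. -/
theorem simple_commute_of_adj (cs : CoxeterSystem (racgMatrix G) W) {a b : V}
    (h : G.Adj a b) : Commute (cs.simple a) (cs.simple b) := by
  have hM : (racgMatrix G) a b = 2 := by
    simp only [racgMatrix, if_neg h.ne, if_pos h]
  have h2 := cs.simple_mul_simple_pow a b
  rw [hM, pow_two] at h2
  have h3 := mul_eq_one_iff_eq_inv.mp h2
  rwa [mul_inv_rev, cs.inv_simple, cs.inv_simple] at h3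

/-- The clique word associated to a finite set `C` of pairwise adjacent vertices:
the product of the simple reflections at the vertices of `C` (in any order; these
commute). If `C` is not a clique, we set the value to `1` by convention. -/
noncomputable def cliqueWord (cs : CoxeterSystem (racgMatrix G) W) (C : Finset V) : W :=
  if h : (C : Set V).Pairwise G.Adj then
    C.noncommProd (fun v => cs.simple v)
      (fun _ ha _ hb hab => simple_commute_of_adj cs (h ha hb hab))
  else 1

/-- `w` is a clique word if it is the product of the simple reflections over a finite
set of pairwise adjacent vertices. -/
def IsCliqueWord (cs : CoxeterSystem (racgMatrix G) W) (w : W) : Prop :=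
  ∃ C : Finset V, (C : Set V).Pairwise G.Adj ∧ w = cliqueWord cs C

end RACG

namespace CoxeterSystem

variable {B W : Type*} [Group W] {M : CoxeterMatrix B} (cs : CoxeterSystem M W)

local prefix:100 "ℓ " => cs.length

theorem length_mul_of_length_mul_mul_left {a b c : W}
    (h : ℓ (a * b * c) = ℓ a + ℓ b + ℓ c) : ℓ (a * b) = ℓ a + ℓ b := by
  have := cs.length_mul_le (a * b) c
  have := cs.length_mul_le a b
  omega

theorem length_mul_of_length_mul_mul_right {a b c : W}
    (h : ℓ (a * b * c) = ℓ a + ℓ b + ℓ c) : ℓ (b * c) = ℓ b + ℓ c := by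
  have := cs.length_mul_le a (b * c)
  have := cs.length_mul_le b c
  rw [mul_assoc] at h
  omega

theorem not_isRightDescent_of_isLeftDescent {a b : W} {i : B} (h : ℓ (a * b) = ℓ a + ℓ b)
    (hb : cs.IsLeftDescent b i) : ¬cs.IsRightDescent a i := fun ha => by
  have := cs.length_mul_le (a * cs.simple i) (cs.simple i * b)
  rw [mul_assoc, cs.simple_mul_simple_cancel_left] at this
  rw [IsLeftDescent] at hb
  rw [IsRightDescent] at ha
  omega

theorem not_isLeftDescent_of_isRightDescent {a b : W} {i : B} (h : ℓ (a * b) = ℓ a + ℓ b)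
    (ha : cs.IsRightDescent a i) : ¬cs.IsLeftDescent b i :=
  fun hb => cs.not_isRightDescent_of_isLeftDescent h hb ha

theorem IsLeftDescent.mul {cs : CoxeterSystem M W} {a b : W} {i : B} (ha : cs.IsLeftDescent a i)
    (h : cs.length (a * b) = cs.length a + cs.length b) : cs.IsLeftDescent (a * b) i := by
  have := cs.length_mul_le (cs.simple i * a) b
  unfold IsLeftDescent at ha ⊢
  rw [← mul_assoc]
  omega

theorem not_isRightDescent_mul_simple_of_commute {w : W} {i j : B}
    (hij : Commute (cs.simple i) (cs.simple j)) (hj : cs.IsRightDescent w j)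
    (hi : ¬cs.IsRightDescent w i) : ¬cs.IsRightDescent (w * cs.simple j) i := by
  rw [cs.isRightDescent_iff] at hj
  rw [cs.not_isRightDescent_iff] at hi
  have := cs.length_le_length_mul_add_right (w * cs.simple i) (cs.simple j)
  rw [mul_assoc, hij.eq, ← mul_assoc, cs.length_simple] at this
  unfold IsRightDescent
  omega

theorem not_isLeftDescent_mul_simple_mul_simple_of_commute {u : W} {c k s : B}
    (hks : Commute (cs.simple k) (cs.simple s)) (hk : cs.IsRightDescent u k)
    (hs : ¬cs.IsRightDescent u s) (hcs : ¬cs.IsLeftDescent (u * cs.simple s) c) :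
    ¬cs.IsLeftDescent (u * cs.simple k * cs.simple s) c := fun h => by
  have hswap : u * cs.simple k * cs.simple s * cs.simple k = u * cs.simple s := by
    rw [mul_assoc u, hks.eq, ← mul_assoc, cs.simple_mul_simple_cancel_right]
  have h₁ := cs.length_mul_le (u * cs.simple k) (cs.simple s)
  have h₂ := cs.length_mul_le (u * cs.simple k * cs.simple s) (cs.simple k)
  have h₃ := cs.isRightDescent_iff.1 hk
  have h₄ := cs.not_isRightDescent_iff.1 hs
  rw [cs.length_simple] at h₁ h₂
  rw [hswap] at h₂
  exact hcs (hswap ▸ h.mul (by rw [hswap, cs.length_simple]; omega))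

theorem length_mul_lt_of_isRightInversion_of_isLeftInversion {x y t : W}
    (hx : cs.IsRightInversion x t) (hy : cs.IsLeftInversion y t) : ℓ (x * y) < ℓ x + ℓ y := by
  calc ℓ (x * y) = ℓ (x * t * (t * y)) := by rw [mul_assoc, ← mul_assoc t, hx.1.mul_self, one_mul]
    _ ≤ ℓ (x * t) + ℓ (t * y) := cs.length_mul_le _ _
    _ < ℓ x + ℓ y := add_lt_add hx.2 hy.2

end CoxeterSystem

namespace RACG

variable {V : Type*}

noncomputable section

def simpleRoot (i : V) : V →₀ ℤ := Finsupp.single i 1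

local notation "α" => simpleRoot

theorem simpleRoot_pos (i : V) : 0 < α i :=
  lt_of_le_of_ne (Finsupp.single_nonneg.2 zero_le_one) (Finsupp.single_ne_zero.2 one_ne_zero).symm

theorem support_subset_of_sub_sum_nonpos {x : V →₀ ℤ} (hx : 0 ≤ x) (C : Finset V) (k : V → ℤ)
    (h : x - ∑ c ∈ C, k c • α c ≤ 0) : ↑x.support ⊆ (C : Set V) := by
  intro b hb
  by_contra hbC
  have hsum : (∑ c ∈ C, k c • α c) b = 0 := by
    rw [Finsupp.finsetSum_apply]
    refine Finset.sum_eq_zero fun c hc => ?_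
    rw [Finsupp.smul_apply, simpleRoot, Finsupp.single_eq_of_ne (by rintro rfl; exact hbC hc),
      smul_zero]
  have h₁ := Finsupp.le_def.1 hx b
  have h₂ := Finsupp.le_def.1 h b
  simp only [Finsupp.coe_zero, Pi.zero_apply, Finsupp.coe_sub, Pi.sub_apply, hsum] at h₁ h₂
  exact Finsupp.mem_support_iff.1 hb (by omega)

section TitsForm

variable [DecidableEq V] (G : SimpleGraph V) [DecidableRel G.Adj]

/-- `-cos (π / m_ab)` for the Coxeter exponents `m_ab ∈ {1, 2, ∞}` of `racgMatrix G`. -/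
def formEntry (a b : V) : ℤ := if a = b then 1 else if G.Adj a b then 0 else -1

theorem formEntry_comm (a b : V) : formEntry G a b = formEntry G b a := by
  unfold formEntry
  by_cases h : a = b
  · subst h; rfl
  · simp [h, Ne.symm h, G.adj_comm]

@[simp] theorem formEntry_self (a : V) : formEntry G a a = 1 := by simp [formEntry]

theorem formEntry_of_adj {a b : V} (h : G.Adj a b) : formEntry G a b = 0 := by
  simp [formEntry, h, h.ne]

theorem formEntry_of_not_adj {a b : V} (hne : a ≠ b) (h : ¬G.Adj a b) : formEntry G a b = -1 := by
  simp [formEntry, hne, h]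

theorem formEntry_nonpos {a b : V} (h : a ≠ b) : formEntry G a b ≤ 0 := by
  by_cases hadj : G.Adj a b <;> simp [formEntry, h, hadj]

def titsForm : LinearMap.BilinForm ℤ (V →₀ ℤ) :=
  Finsupp.lsum ℤ fun a => LinearMap.toSpanSingleton ℤ _
    (Finsupp.lsum ℤ fun b => LinearMap.toSpanSingleton ℤ ℤ (formEntry G a b))

theorem titsForm_single_single (a b : V) (x y : ℤ) :
    titsForm G (Finsupp.single a x) (Finsupp.single b y) = x * y * formEntry G a b := by
  simp [titsForm, LinearMap.toSpanSingleton_apply, mul_assoc]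

theorem titsForm_simpleRoot (a b : V) : titsForm G (α a) (α b) = formEntry G a b := by
  simp [simpleRoot, titsForm_single_single]

theorem titsForm_comm (x y : V →₀ ℤ) : titsForm G x y = titsForm G y x := by
  suffices titsForm G = (titsForm G).flip from congrArg (fun B => B x y) this
  refine Finsupp.lhom_ext fun a c => Finsupp.lhom_ext fun b d => ?_
  change _ = titsForm G _ _
  rw [titsForm_single_single, titsForm_single_single, formEntry_comm]
  ring

theorem titsForm_apply (x y : V →₀ ℤ) :
    titsForm G x y = ∑ a ∈ x.support, x a * ∑ b ∈ y.support, y b * formEntry G a b := by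
  simp [titsForm, Finsupp.lsum_apply, Finsupp.sum, LinearMap.toSpanSingleton_apply]

theorem titsForm_self_of_support_subset {C : Finset V} (hC : (C : Set V).Pairwise G.Adj)
    {x : V →₀ ℤ} (hx : ↑x.support ⊆ (C : Set V)) :
    titsForm G x x = ∑ a ∈ x.support, x a * x a := by
  rw [titsForm_apply]
  refine Finset.sum_congr rfl fun a ha => congrArg (x a * ·) ?_
  rw [Finset.sum_eq_single_of_mem a ha fun b hb hba =>
    by rw [formEntry_of_adj G (hC (hx ha) (hx hb) hba.symm), mul_zero], formEntry_self, mul_one]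

theorem exists_eq_simpleRoot_of_titsForm_self {C : Finset V} (hC : (C : Set V).Pairwise G.Adj)
    {x : V →₀ ℤ} (hpos : 0 < x) (hx : ↑x.support ⊆ (C : Set V)) (hnorm : titsForm G x x = 1) :
    ∃ c ∈ C, x = α c := by
  rw [titsForm_self_of_support_subset G hC hx] at hnorm
  have hnonneg : ∀ a, 0 ≤ x a := fun a => by simpa using Finsupp.le_def.1 hpos.le a
  have hsq : ∀ a ∈ x.support, 1 ≤ x a * x a := fun a ha => by
    have := Finsupp.mem_support_iff.1 ha
    nlinarith [show 1 ≤ x a by have := hnonneg a; omega]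
  have hcard : x.support.card ≤ 1 := by
    simpa [hnorm] using Finset.card_nsmul_le_sum x.support _ 1 hsq
  obtain ⟨c, hc⟩ := Finsupp.support_nonempty_iff.2 hpos.ne'
  have hsupp : x.support = {c} := Finset.eq_singleton_iff_unique_mem.2
    ⟨hc, fun b hb => Finset.card_le_one.1 hcard b hb c hc⟩
  have hxc : x c = 1 := by
    rw [hsupp, Finset.sum_singleton] at hnorm
    nlinarith [hnonneg c]
  refine ⟨c, hx (by simp [hsupp]), ?_⟩
  rw [(Finsupp.support_eq_singleton.1 hsupp).2, hxc, simpleRoot]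

def rootReflection (i : V) : Module.End ℤ (V →₀ ℤ) :=
  LinearMap.id - LinearMap.smulRight ((2 : ℤ) • titsForm G (α i)) (α i)

theorem rootReflection_apply (i : V) (x : V →₀ ℤ) :
    rootReflection G i x = x - (2 * titsForm G (α i) x) • α i := by
  simp [rootReflection]

theorem rootReflection_simpleRoot_self (i : V) : rootReflection G i (α i) = -α i := by
  rw [rootReflection_apply, titsForm_simpleRoot, formEntry_self]
  module

theorem rootReflection_simpleRoot_of_adj {i j : V} (h : G.Adj i j) :
    rootReflection G i (α j) = α j := by
  rw [rootReflection_apply, titsForm_simpleRoot, formEntry_of_adj G h]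
  module

theorem rootReflection_simpleRoot_of_not_adj {i j : V} (hne : i ≠ j) (h : ¬G.Adj i j) :
    rootReflection G i (α j) = α j + (2 : ℤ) • α i := by
  rw [rootReflection_apply, titsForm_simpleRoot, formEntry_of_not_adj G hne h]
  module

theorem titsForm_rootReflection (i : V) (x y : V →₀ ℤ) :
    titsForm G (rootReflection G i x) (rootReflection G i y) = titsForm G x y := by
  simp only [rootReflection_apply, map_sub, map_smul, LinearMap.sub_apply, LinearMap.smul_apply,
    smul_eq_mul, titsForm_simpleRoot, formEntry_self, titsForm_comm G x (α i)]
  ring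

theorem rootReflection_rootReflection (i : V) (x : V →₀ ℤ) :
    rootReflection G i (rootReflection G i x) = x := by
  rw [rootReflection_apply, rootReflection_apply]
  simp only [map_sub, map_smul, smul_eq_mul, titsForm_simpleRoot, formEntry_self]
  module

theorem rootReflection_comm_of_adj {i j : V} (h : G.Adj i j) (x : V →₀ ℤ) :
    rootReflection G i (rootReflection G j x) = rootReflection G j (rootReflection G i x) := by
  simp only [rootReflection_apply, map_sub, map_smul, titsForm_simpleRoot,
    formEntry_of_adj G h, formEntry_of_adj G h.symm, mul_zero, zero_smul, sub_zero]
  module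

end TitsForm

section GeometricRepresentation

variable [DecidableEq V] {G : SimpleGraph V} [DecidableRel G.Adj] {W : Type*} [Group W]
  (cs : CoxeterSystem (racgMatrix G) W)

theorem isLiftable_rootReflection : (racgMatrix G).IsLiftable (rootReflection G) := by
  intro i j
  by_cases hij : i = j
  · subst hij
    simp only [CoxeterMatrix.diagonal, pow_one]
    exact LinearMap.ext (rootReflection_rootReflection G i)
  by_cases hadj : G.Adj i j
  · have hM : racgMatrix G i j = 2 := by simp [racgMatrix, hij, hadj]
    refine hM ▸ LinearMap.ext fun x => ?_
    simp only [pow_two, Module.End.mul_apply, Module.End.one_apply]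
    rw [rootReflection_comm_of_adj G hadj, rootReflection_rootReflection,
      rootReflection_rootReflection]
  · have hM : racgMatrix G i j = 0 := by simp [racgMatrix, hij, hadj]
    rw [hM, pow_zero]

def geomRep : W →* Module.End ℤ (V →₀ ℤ) :=
  cs.lift ⟨rootReflection G, isLiftable_rootReflection⟩

local notation "ρ" => geomRep cs
local prefix:100 "ℓ " => cs.length

theorem geomRep_simple (i : V) : ρ (cs.simple i) = rootReflection G i :=
  cs.lift_apply_simple isLiftable_rootReflection i

theorem geomRep_mul_apply (a b : W) (x : V →₀ ℤ) : ρ (a * b) x = ρ a (ρ b x) := by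
  rw [map_mul, Module.End.mul_apply]

theorem geomRep_mul_simple_apply (w : W) (i : V) (x : V →₀ ℤ) :
    ρ (w * cs.simple i) x = ρ w (rootReflection G i x) := by
  rw [geomRep_mul_apply, geomRep_simple]

theorem geomRep_mul_simple_simpleRoot_self (w : W) (i : V) :
    ρ (w * cs.simple i) (α i) = -ρ w (α i) := by
  rw [geomRep_mul_simple_apply, rootReflection_simpleRoot_self, map_neg]

theorem titsForm_geomRep (w : W) (x y : V →₀ ℤ) : titsForm G (ρ w x) (ρ w y) = titsForm G x y := by
  induction w using cs.simple_induction generalizing x y with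
  | simple i => rw [geomRep_simple, titsForm_rootReflection]
  | one => simp
  | mul w w' hw hw' => rw [geomRep_mul_apply, geomRep_mul_apply, hw, hw']

theorem titsForm_simpleRoot_geomRep (w : W) (a b : V) :
    titsForm G (α a) (ρ w (α b)) = titsForm G (ρ w⁻¹ (α a)) (α b) := by
  conv_lhs => rw [← titsForm_geomRep cs w⁻¹, ← geomRep_mul_apply, inv_mul_cancel, map_one,
    Module.End.one_apply]

/-- `w = v * s_y * x`, where `v` is the shortest element of the coset `w ⟨s_i, s_j⟩`; the two
formulas describe the action of the infinite dihedral group `⟨s_i, s_j⟩` on `α i` and `α j`. -/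
theorem exists_dihedral_factorization {w : W} {i j : V} (hij : ¬G.Adj i j)
    (hj : cs.IsRightDescent w j) (hi : ¬cs.IsRightDescent w i) :
    ∃ (v x : W) (y : V) (m : ℕ), w = v * cs.simple y * x ∧ ℓ w = ℓ (v * cs.simple y) + ℓ x ∧
      ¬cs.IsRightDescent v y ∧ ¬cs.IsRightDescent v i ∧ ¬cs.IsRightDescent v j ∧
      ρ w (α i) = ρ v (α y) + (m + 1) • (ρ v (α i) + ρ v (α j)) ∧
      ρ w (α j) = -(ρ v (α y) + m • (ρ v (α i) + ρ v (α j))) := by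
  induction hn : ℓ w generalizing w i j with
  | zero => exact absurd hj (by rw [cs.length_eq_zero_iff.1 hn]; exact cs.not_isRightDescent_one j)
  | succ n ih =>
  have hne : i ≠ j := by rintro rfl; exact hi hj
  set w' := w * cs.simple j
  have hw : w = w' * cs.simple j := (cs.simple_mul_simple_cancel_right j).symm
  have hlen : ℓ w' + 1 = ℓ w := cs.isRightDescent_iff.1 hj
  have hρi : ρ w (α i) = ρ w' (α i) + (2 : ℤ) • ρ w' (α j) := by
    rw [hw, geomRep_mul_simple_apply, rootReflection_simpleRoot_of_not_adj G hne.symm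
      (fun h => hij h.symm), map_add, map_smul]
  have hρj : ρ w (α j) = -ρ w' (α j) := by
    rw [hw, geomRep_mul_simple_simpleRoot_self]
  by_cases hi' : cs.IsRightDescent w' i
  · have hj' : ¬cs.IsRightDescent w' j := by
      rw [cs.isRightDescent_iff_not_isRightDescent_mul, ← hw]; exact not_not.2 hj
    obtain ⟨v, x, y, m, hvx, hvlen, hy, hvj, hvi, hρj', hρi'⟩ :=
      ih (fun h => hij h.symm) hi' hj' (by omega)
    refine ⟨v, x * cs.simple j, y, m + 1, by rw [hw, hvx, mul_assoc], ?_, hy, hvi, hvj,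
      ?_, ?_⟩
    · have h₁ := cs.length_mul_le x (cs.simple j)
      have h₂ := cs.length_mul_le (v * cs.simple y) (x * cs.simple j)
      rw [cs.length_simple] at h₁
      rw [← mul_assoc, ← hvx, ← hw] at h₂
      omega
    · rw [hρi, hρi', hρj']; module
    · rw [hρj, hρj']; module
  · have hj' : ¬cs.IsRightDescent w' j := by
      rw [cs.isRightDescent_iff_not_isRightDescent_mul, ← hw]; exact not_not.2 hj
    refine ⟨w', 1, j, 0, by rw [hw, mul_one], by rw [cs.length_one, ← hw, add_zero, hn],
      hj', hi', hj', ?_, ?_⟩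
    · rw [hρi]; module
    · rw [hρj]; module

theorem geomRep_simpleRoot_pos {w : W} {i : V} (hi : ¬cs.IsRightDescent w i) : 0 < ρ w (α i) := by
  induction hn : ℓ w using Nat.strong_induction_on generalizing w i with
  | _ n ih =>
  obtain rfl | hw := eq_or_ne w 1
  · simpa using simpleRoot_pos i
  obtain ⟨j, hj⟩ := cs.exists_rightDescent_of_ne_one hw
  have hlen : ℓ (w * cs.simple j) < n := hn ▸ hj
  by_cases hadj : G.Adj i j
  · have h := cs.not_isRightDescent_mul_simple_of_commute
      (simple_commute_of_adj cs hadj) hj hi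
    rw [← rootReflection_simpleRoot_of_adj G hadj.symm, ← geomRep_mul_simple_apply]
    exact ih _ hlen h rfl
  · obtain ⟨v, x, y, m, -, hvlen, hy, hvi, hvj, hρ, -⟩ :=
      exists_dihedral_factorization cs hadj hj hi
    have hv : ℓ v < n := by have := cs.not_isRightDescent_iff.1 hy; omega
    rw [hρ]
    exact add_pos_of_pos_of_nonneg (ih _ hv hy rfl)
      (nsmul_nonneg (add_nonneg (ih _ hv hvi rfl).le (ih _ hv hvj rfl).le) _)

theorem geomRep_simpleRoot_neg {w : W} {i : V} (hi : cs.IsRightDescent w i) : ρ w (α i) < 0 := by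
  have := geomRep_simpleRoot_pos cs (cs.isRightDescent_iff_not_isRightDescent_mul.1 hi)
  rwa [geomRep_mul_simple_simpleRoot_self, neg_pos] at this

theorem geomRep_simpleRoot_pos_iff {w : W} {i : V} :
    0 < ρ w (α i) ↔ ¬cs.IsRightDescent w i :=
  ⟨fun h hi => lt_asymm h (geomRep_simpleRoot_neg cs hi), geomRep_simpleRoot_pos cs⟩

theorem geomRep_simpleRoot_neg_iff {w : W} {i : V} :
    ρ w (α i) < 0 ↔ cs.IsRightDescent w i :=
  ⟨fun h => not_not.1 fun hi => lt_asymm h (geomRep_simpleRoot_pos cs hi),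
    geomRep_simpleRoot_neg cs⟩

theorem geomRep_simpleRoot_pos_or_neg (w : W) (i : V) : 0 < ρ w (α i) ∨ ρ w (α i) < 0 :=
  (em _).symm.imp (geomRep_simpleRoot_pos cs) (geomRep_simpleRoot_neg cs)

theorem geomRep_injective : Function.Injective ρ := by
  refine (injective_iff_map_eq_one _).2 fun w hw => not_not.1 fun hw1 => ?_
  obtain ⟨j, hj⟩ := cs.exists_rightDescent_of_ne_one hw1
  have := geomRep_simpleRoot_neg cs hj
  rw [hw, Module.End.one_apply] at this
  exact lt_asymm this (simpleRoot_pos j)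

theorem cliqueWord_of_pairwise {C : Finset V} (hC : (C : Set V).Pairwise G.Adj) :
    cliqueWord cs C =
      C.noncommProd cs.simple fun _ ha _ hb hab => simple_commute_of_adj cs (hC ha hb hab) :=
  dif_pos hC

theorem cliqueWord_singleton (i : V) : cliqueWord cs {i} = cs.simple i := by
  rw [cliqueWord_of_pairwise cs (by simp), Finset.noncommProd_singleton]

theorem cliqueWord_insert {a : V} {C : Finset V} (ha : a ∉ C)
    (hC : ((insert a C : Finset V) : Set V).Pairwise G.Adj) :
    cliqueWord cs (insert a C) = cs.simple a * cliqueWord cs C := by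
  rw [cliqueWord_of_pairwise cs hC,
    cliqueWord_of_pairwise cs (hC.mono (Finset.coe_subset.2 (Finset.subset_insert a C)))]
  exact Finset.noncommProd_insert_of_notMem C a _ _ ha

theorem cliqueWord_inv {C : Finset V} (hC : (C : Set V).Pairwise G.Adj) :
    (cliqueWord cs C)⁻¹ = cliqueWord cs C := by
  refine inv_eq_of_mul_eq_one_right ?_
  have hcomm : (C : Set V).Pairwise fun a b => Commute (cs.simple a) (cs.simple b) :=
    fun _ ha _ hb hab => simple_commute_of_adj cs (hC ha hb hab)
  rw [cliqueWord_of_pairwise cs hC, ← Finset.noncommProd_mul_distrib _ _ hcomm hcomm hcomm,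
    Finset.noncommProd_eq_pow_card C (cs.simple * cs.simple) _ 1 fun c _ =>
      cs.simple_mul_simple_self c, one_pow]

theorem geomRep_cliqueWord_apply {C : Finset V} (hC : (C : Set V).Pairwise G.Adj)
    (x : V →₀ ℤ) : ρ (cliqueWord cs C) x = x - ∑ c ∈ C, (2 * titsForm G (α c) x) • α c := by
  induction C using Finset.induction_on with
  | empty => simp [cliqueWord, Finset.noncommProd]
  | @insert a C ha ih =>
    have hfix : ∀ c ∈ C, rootReflection G a ((2 * titsForm G (α c) x) • α c) =
        (2 * titsForm G (α c) x) • α c := fun c hc => by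
      rw [map_smul, rootReflection_simpleRoot_of_adj G
        (hC (by simp) (by simp [hc]) (by rintro rfl; exact ha hc))]
    rw [cliqueWord_insert cs ha hC, geomRep_mul_apply, geomRep_simple,
      ih (hC.mono (Finset.coe_subset.2 (Finset.subset_insert a C))), map_sub, map_sum,
      Finset.sum_congr rfl hfix, Finset.sum_insert ha, rootReflection_apply]
    abel

theorem geomRep_cliqueWord_simpleRoot {C : Finset V} (hC : (C : Set V).Pairwise G.Adj) {c : V}
    (hc : c ∈ C) : ρ (cliqueWord cs C) (α c) = -α c := by
  rw [geomRep_cliqueWord_apply cs hC, Finset.sum_eq_single_of_mem c hc fun b hb hbc => by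
    rw [titsForm_simpleRoot, formEntry_of_adj G (hC hb hc hbc), mul_zero, zero_smul],
    titsForm_simpleRoot, formEntry_self]
  module

theorem isRightDescent_cliqueWord {C : Finset V} (hC : (C : Set V).Pairwise G.Adj) {c : V}
    (hc : c ∈ C) : cs.IsRightDescent (cliqueWord cs C) c := by
  rw [← geomRep_simpleRoot_neg_iff, geomRep_cliqueWord_simpleRoot cs hC hc, neg_lt_zero]
  exact simpleRoot_pos c

theorem isLeftDescent_cliqueWord {C : Finset V} (hC : (C : Set V).Pairwise G.Adj) {c : V}
    (hc : c ∈ C) : cs.IsLeftDescent (cliqueWord cs C) c := by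
  rw [← cliqueWord_inv cs hC, cs.isLeftDescent_inv_iff]
  exact isRightDescent_cliqueWord cs hC hc

theorem exists_eq_simpleRoot_of_cliqueWord_mul_neg {C : Finset V}
    (hC : (C : Set V).Pairwise G.Adj) {g : W} {a : V} (hpos : 0 < ρ g (α a))
    (hneg : ρ (cliqueWord cs C * g) (α a) < 0) : ∃ c ∈ C, ρ g (α a) = α c := by
  rw [geomRep_mul_apply, geomRep_cliqueWord_apply cs hC] at hneg
  refine exists_eq_simpleRoot_of_titsForm_self G hC hpos
    (support_subset_of_sub_sum_nonpos hpos.le C _ hneg.le) ?_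
  rw [titsForm_geomRep, titsForm_simpleRoot, formEntry_self]

theorem eq_simpleRoot_of_simple_mul_neg {g : W} {a i : V} (hpos : 0 < ρ g (α a))
    (hneg : ρ (cs.simple i * g) (α a) < 0) : ρ g (α a) = α i := by
  rw [← cliqueWord_singleton] at hneg
  obtain ⟨c, hc, h⟩ := exists_eq_simpleRoot_of_cliqueWord_mul_neg cs (by simp) hpos hneg
  rwa [Finset.mem_singleton.1 hc] at h

theorem exists_eq_simpleRoot_of_wordProd_mul_neg (ω : List V) {g : W} {a : V}
    (hpos : 0 < ρ g (α a)) (hneg : ρ (cs.wordProd ω * g) (α a) < 0) :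
    ∃ ω₁ i ω₂, ω = ω₁ ++ i :: ω₂ ∧ ρ (cs.wordProd ω₂ * g) (α a) = α i := by
  induction ω with
  | nil =>
    rw [cs.wordProd_nil, one_mul] at hneg
    exact absurd hneg (lt_asymm hpos)
  | cons i ω ih =>
    rw [cs.wordProd_cons, mul_assoc] at hneg
    rcases geomRep_simpleRoot_pos_or_neg cs (cs.wordProd ω * g) a with h | h
    · exact ⟨[], i, ω, rfl, eq_simpleRoot_of_simple_mul_neg cs h hneg⟩
    · obtain ⟨ω₁, j, ω₂, rfl, h'⟩ := ih h
      exact ⟨i :: ω₁, j, ω₂, rfl, h'⟩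

theorem conj_simple_eq_simple {g : W} {a i : V} (h : ρ g (α a) = α i) :
    g * cs.simple a * g⁻¹ = cs.simple i := by
  refine geomRep_injective cs (LinearMap.ext fun y => ?_)
  have hy : y = ρ g (ρ g⁻¹ y) := by
    rw [← geomRep_mul_apply, mul_inv_cancel, map_one, Module.End.one_apply]
  have hB : titsForm G (α a) (ρ g⁻¹ y) = titsForm G (α i) y := by
    rw [← titsForm_geomRep cs g, ← hy, h]
  rw [geomRep_mul_apply, geomRep_mul_simple_apply, rootReflection_apply, map_sub, map_smul, ← hy,
    h, hB, geomRep_simple, rootReflection_apply]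

/-- The strong exchange condition. -/
theorem isRightInversion_of_geomRep_neg {w g : W} {a : V} (hpos : 0 < ρ g (α a))
    (hneg : ρ (w * g) (α a) < 0) : cs.IsRightInversion w (g * cs.simple a * g⁻¹) := by
  obtain ⟨ω, hω, rfl⟩ := cs.exists_isReduced w
  obtain ⟨ω₁, i, ω₂, rfl, hi⟩ := exists_eq_simpleRoot_of_wordProd_mul_neg cs _ hpos hneg
  refine ⟨(cs.isReflection_simple a).conj g, ?_⟩
  have hdel : cs.wordProd (ω₁ ++ i :: ω₂) * (g * cs.simple a * g⁻¹) =
      cs.wordProd (ω₁ ++ ω₂) := by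
    rw [cs.wordProd_append, cs.wordProd_cons, cs.wordProd_append, ← conj_simple_eq_simple cs hi]
    simp only [mul_inv_rev, mul_assoc, inv_mul_cancel_left, cs.simple_mul_simple_cancel_left,
      mul_inv_cancel, mul_one]
  rw [hdel, hω.eq]
  calc cs.length (cs.wordProd (ω₁ ++ ω₂)) ≤ (ω₁ ++ ω₂).length := cs.length_wordProd_le _
    _ < (ω₁ ++ i :: ω₂).length := by simp

theorem geomRep_pos_of_length_mul_eq {x y g : W} {a : V} (hxy : ℓ (x * y) = ℓ x + ℓ y)
    (hpos : 0 < ρ g (α a)) (hneg : ρ (x * g) (α a) < 0) : 0 < ρ (y⁻¹ * g) (α a) := by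
  refine (geomRep_simpleRoot_pos_or_neg cs (y⁻¹ * g) a).resolve_right fun h => ?_
  have hx := isRightInversion_of_geomRep_neg cs hpos hneg
  have hy := cs.isRightInversion_inv_iff.1 (isRightInversion_of_geomRep_neg cs hpos h)
  exact (cs.length_mul_lt_of_isRightInversion_of_isLeftInversion hx hy).ne hxy

theorem geomRep_inv_simpleRoot_eq_of_isLeftDescent {v : W} {c z : V}
    (hv : ¬cs.IsLeftDescent v c) (hvz : cs.IsLeftDescent (v * cs.simple z) c) :
    ρ v⁻¹ (α c) = α z := by
  refine eq_simpleRoot_of_simple_mul_neg cs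
    (geomRep_simpleRoot_pos cs (cs.isRightDescent_inv_iff.not.2 hv)) ?_
  rw [← cs.inv_simple z, ← mul_inv_rev, geomRep_simpleRoot_neg_iff, cs.isRightDescent_inv_iff]
  exact hvz

/-- Induction on `ℓ u` through a right descent `k` of `u`: a `k` commuting with `s` is dropped;
otherwise the dihedral factorization reduces to a shorter `v`, where the hypotheses can fail for
at most one of `s`, `k`, and then the two contributions cancel. -/
theorem titsForm_simpleRoot_geomRep_nonpos {u : W} {c s : V} (hc : ¬cs.IsLeftDescent u c)
    (hs : ¬cs.IsRightDescent u s) (hcs : ¬cs.IsLeftDescent (u * cs.simple s) c) :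
    titsForm G (α c) (ρ u (α s)) ≤ 0 := by
  induction hn : ℓ u using Nat.strong_induction_on generalizing u s with
  | _ n ih =>
  obtain rfl | hu := eq_or_ne u 1
  · have hcs' : c ≠ s := by
      rintro rfl
      exact hcs (by simp [CoxeterSystem.IsLeftDescent])
    rw [map_one, Module.End.one_apply, titsForm_simpleRoot]
    exact formEntry_nonpos G hcs'
  obtain ⟨k, hk⟩ := cs.exists_rightDescent_of_ne_one hu
  have hks : k ≠ s := by rintro rfl; exact hs hk
  have hk_len := cs.isRightDescent_iff.1 hk
  by_cases hadj : G.Adj k s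
  · have hcomm := simple_commute_of_adj cs hadj
    rw [← rootReflection_simpleRoot_of_adj G hadj, ← geomRep_mul_simple_apply]
    refine ih _ (hn ▸ hk) ?_ (cs.not_isRightDescent_mul_simple_of_commute hcomm.symm hk hs) ?_ rfl
    · refine fun h => hc ?_
      rw [← cs.simple_mul_simple_cancel_right (w := u) k]
      exact h.mul (by rw [cs.simple_mul_simple_cancel_right, cs.length_simple]; omega)
    · exact cs.not_isLeftDescent_mul_simple_mul_simple_of_commute hcomm hk hs hcs
  · obtain ⟨v, x, y, m, rfl, hvlen, hvy, hvs, hvk, hρ, -⟩ :=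
      exists_dihedral_factorization cs (fun h => hadj h.symm) hk hs
    have hvy_len := cs.not_isRightDescent_iff.1 hvy
    have hv : ℓ v < n := by omega
    have hcvy : ¬cs.IsLeftDescent (v * cs.simple y) c := fun h => hc (h.mul hvlen)
    have hcv : ¬cs.IsLeftDescent v c := fun h => hcvy (h.mul (by rw [cs.length_simple, hvy_len]))
    have hcases : ∀ z, ¬cs.IsRightDescent v z →
        titsForm G (α c) (ρ v (α z)) ≤ 0 ∨ ρ v⁻¹ (α c) = α z := fun z hz => by
      by_cases hcz : cs.IsLeftDescent (v * cs.simple z) c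
      · exact Or.inr (geomRep_inv_simpleRoot_eq_of_isLeftDescent cs hcv hcz)
      · exact Or.inl (ih _ hv hcv hz hcz rfl)
    have hpair : titsForm G (α c) (ρ v (α s)) + titsForm G (α c) (ρ v (α k)) ≤ 0 := by
      simp only [titsForm_simpleRoot_geomRep cs v c] at hcases ⊢
      rcases hcases s hvs with hs' | hs'
      · rcases hcases k hvk with hk' | hk'
        · exact add_nonpos hs' hk'
        · simp [hk', titsForm_simpleRoot, formEntry_of_not_adj G hks hadj]
      · simp [hs', titsForm_simpleRoot, formEntry_of_not_adj G hks hadj, formEntry_comm G s k]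
    rw [hρ, map_add, map_nsmul, map_add]
    exact add_nonpos (ih _ hv hcv hvy hcvy rfl) (nsmul_nonpos hpair _)

theorem titsForm_simpleRoot_geomRep_nonpos_of_cliqueWord {C : Finset V}
    (hC : (C : Set V).Pairwise G.Adj) {u : W} {v : V}
    (hCu : ℓ (cliqueWord cs C * u) = ℓ (cliqueWord cs C) + ℓ u) (hu : ¬cs.IsRightDescent u v)
    (hCuv : ¬cs.IsRightDescent (cliqueWord cs C * u) v) :
    ∀ c ∈ C, titsForm G (α c) (ρ u (α v)) ≤ 0 := fun c hc => by
  have hCc := isRightDescent_cliqueWord cs hC hc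
  refine titsForm_simpleRoot_geomRep_nonpos cs (cs.not_isLeftDescent_of_isRightDescent hCu hCc) hu
    (cs.not_isLeftDescent_of_isRightDescent ?_ hCc)
  rw [← mul_assoc, cs.not_isRightDescent_iff.1 hCuv, cs.not_isRightDescent_iff.1 hu, hCu,
    add_assoc]

theorem geomRep_mul_cliqueWord_pos {C : Finset V} (hC : (C : Set V).Pairwise G.Adj) {w : W}
    {x : V →₀ ℤ} (hx : 0 < ρ w x) (hwC : ∀ c ∈ C, 0 < ρ w (α c))
    (hxC : ∀ c ∈ C, titsForm G (α c) x ≤ 0) : 0 < ρ (w * cliqueWord cs C) x := by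
  rw [geomRep_mul_apply, geomRep_cliqueWord_apply cs hC, map_sub, map_sum, sub_eq_add_neg,
    ← Finset.sum_neg_distrib]
  refine add_pos_of_pos_of_nonneg hx (Finset.sum_nonneg fun c hc => ?_)
  rw [map_smul, ← neg_smul]
  exact smul_nonneg (by linarith [hxC c hc]) (hwC c hc).le

theorem exists_geomRep_cliqueWord_mul_eq_simpleRoot {C : Finset V}
    (hC : (C : Set V).Pairwise G.Adj) {u : W} {v : V} (hu : cs.IsRightDescent u v)
    (hCu : ¬cs.IsRightDescent (cliqueWord cs C * u) v) :
    ∃ c ∈ C, ρ (cliqueWord cs C * u) (α v) = α c := by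
  have hpos : 0 < ρ (u * cs.simple v) (α v) := by
    rw [geomRep_mul_simple_simpleRoot_self, neg_pos]
    exact geomRep_simpleRoot_neg cs hu
  have hneg : ρ (cliqueWord cs C * (u * cs.simple v)) (α v) < 0 := by
    rw [← mul_assoc, geomRep_mul_simple_simpleRoot_self, neg_lt_zero]
    exact geomRep_simpleRoot_pos cs hCu
  obtain ⟨c, hc, h⟩ := exists_eq_simpleRoot_of_cliqueWord_mul_neg cs hC hpos hneg
  refine ⟨c, hc, ?_⟩
  rw [geomRep_mul_simple_simpleRoot_self, neg_eq_iff_eq_neg] at h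
  rw [geomRep_mul_apply, h, map_neg, geomRep_cliqueWord_simpleRoot cs hC hc, neg_neg]

end GeometricRepresentation

end

end RACG

open RACG

theorem rightDescent_of_common_descent_clique_tail
    {V : Type*} [DecidableEq V] (G : SimpleGraph V) [DecidableRel G.Adj]
    {W : Type*} [Group W] (cs : CoxeterSystem (RACG.racgMatrix G) W)
    (w₁ w₂ w₃ u : W)
    (hclique : RACG.IsCliqueWord cs w₂)
    (h₁ : cs.length (w₁ * w₂ * w₃) = cs.length w₁ + cs.length w₂ + cs.length w₃)
    (h₂ : cs.length (w₁ * w₂ * u) = cs.length w₁ + cs.length w₂ + cs.length u)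
    (h₃ : cs.length (w₃⁻¹ * w₂ * u) = cs.length w₃ + cs.length w₂ + cs.length u)
    (v : V)
    (hd₁ : cs.IsRightDescent (w₁ * w₂ * u) v)
    (hd₂ : cs.IsRightDescent (w₃⁻¹ * w₂ * u) v) :
    cs.IsRightDescent (w₂ * u) v := by
  obtain ⟨C, hC, rfl⟩ := hclique
  have hw₁C : ∀ c ∈ C, 0 < geomRep cs w₁ (simpleRoot c) := fun c hc =>
    geomRep_simpleRoot_pos cs (cs.not_isRightDescent_of_isLeftDescent
      (cs.length_mul_of_length_mul_mul_left h₁) (isLeftDescent_cliqueWord cs hC hc))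
  have hneg₁ := geomRep_simpleRoot_neg cs hd₁
  by_contra hCu
  rcases geomRep_simpleRoot_pos_or_neg cs u v with hu | hu
  · have h₃₁ : cs.length (w₃⁻¹ * cliqueWord cs C * w₁⁻¹) =
        cs.length (w₃⁻¹ * cliqueWord cs C) + cs.length w₁⁻¹ := by
      rw [← cs.length_inv, mul_inv_rev, mul_inv_rev, inv_inv, inv_inv, cliqueWord_inv cs hC,
        ← mul_assoc, h₁, cs.length_inv, ← cs.length_inv w₃,
        cs.length_mul_of_length_mul_mul_left (cs.length_inv w₃ ▸ h₃)]
      ring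
    have hw₁u := geomRep_pos_of_length_mul_eq cs h₃₁ hu (geomRep_simpleRoot_neg cs hd₂)
    rw [inv_inv, geomRep_mul_apply] at hw₁u
    rw [geomRep_mul_apply] at hneg₁
    refine lt_asymm hneg₁ (geomRep_mul_cliqueWord_pos cs hC hw₁u hw₁C ?_)
    exact titsForm_simpleRoot_geomRep_nonpos_of_cliqueWord cs hC
      (cs.length_mul_of_length_mul_mul_right h₂) ((geomRep_simpleRoot_pos_iff cs).1 hu) hCu
  · obtain ⟨c, hc, hcu⟩ := exists_geomRep_cliqueWord_mul_eq_simpleRoot cs hC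
      ((geomRep_simpleRoot_neg_iff cs).1 hu) hCu
    rw [mul_assoc, geomRep_mul_apply, hcu] at hneg₁
    exact lt_asymm hneg₁ (hw₁C c hc)
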